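/- Let n ≥ 3, ε > 0 and v_ε(x) = ε^((n-2)/2) · ((ε + xₙ)² + Σ_{a=1}^{n-1} x_a²)^(-(n-2)/2) on ℝⁿ₊. Then for all i, k ∈ {1,…,n} and all x in the interior of ℝⁿ₊: v_ε(x) · ∂ᵢ∂ₖ v_ε(x) − (n/(n−2)) · ∂ᵢ v_ε(x) · ∂ₖ v_ε(x) = −(1/(n−2)) · |dv_ε(x)|² · δᵢₖ, where |dv_ε|² = Σⱼ (∂ⱼ v_ε)² and δᵢₖ is the Kronecker delta. -/

import Mathlib

open scoped BigOperators
open MeasureTheory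

noncomputable section

abbrev E (n : ℕ) := EuclideanSpace ℝ (Fin n)

/-- Partial derivative in the `i`-th coordinate direction. -/
def pder {n : ℕ} (i : Fin n) (f : E n → ℝ) (x : E n) : ℝ :=
  fderiv ℝ f x (EuclideanSpace.single i 1)

/-- Euclidean Laplacian. -/
def lap {n : ℕ} (f : E n → ℝ) (x : E n) : ℝ :=
  ∑ i, pder i (pder i f) x

/-- The index of the last ("normal") coordinate `x_n`. -/
def nIdx (n : ℕ) (hn : 0 < n) : Fin n := ⟨n - 1, Nat.sub_lt hn one_pos⟩

/-- The model function `v_ε` on the upper half-space. -/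
def vE (n : ℕ) (hn : 0 < n) (ε : ℝ) (x : E n) : ℝ :=
  ε ^ (((n : ℝ) - 2) / 2) *
    ((ε + x (nIdx n hn)) ^ 2 + ∑ a ∈ Finset.univ.erase (nIdx n hn), x a ^ 2) ^
      (-(((n : ℝ) - 2) / 2))

/-!
Write `v_ε = C (‖x - a‖²)^(-p)` with `a = -ε eₙ`, `p = (n - 2)/2` and `C = ε^p`. On any real inner
product space, `f = C w^q` with `w = ‖x - a‖²` has `Df = 2Cq w^(q-1) ⟪x - a, ·⟫` and
`D²f(u, v) = 2Cq w^(q-1) ⟪u, v⟫ + 4Cq(q-1) w^(q-2) ⟪x - a, u⟫ ⟪x - a, v⟫`.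
For `q = -p` the rank-one part of `f D²f` is `(p+1)/p · Df ⊗ Df`, and its isotropic part
`-2pC² w^(-2p-1) ⟪u, v⟫` is `-(1/2p) ‖Df‖² ⟪u, v⟫`, because `‖Df‖² = 4p²C² w^(-2p-1)`.
In coordinates, `n/(n-2) = (p+1)/p` and `Σⱼ (∂ⱼ v)² = ‖Dv‖²` (Parseval).
-/

open scoped RealInnerProductSpace

section RpowNormSubSq

variable {F : Type*} [NormedAddCommGroup F] [InnerProductSpace ℝ F] (C q : ℝ) {a x : F}

theorem hasFDerivAt_mul_rpow_norm_sub_sq (hx : x ≠ a) :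
    HasFDerivAt (fun z => C * (‖z - a‖ ^ 2) ^ q)
      ((2 * C * q * (‖x - a‖ ^ 2) ^ (q - 1)) • innerSL ℝ (x - a)) x := by
  have hw : ‖x - a‖ ^ 2 ≠ 0 := by simpa [sub_eq_zero] using hx
  refine (((hasFDerivAt_sub_const a).norm_sq.rpow_const (Or.inl hw)).const_mul C).congr_fderiv ?_
  ext u
  simp only [smul_apply, ContinuousLinearMap.comp_apply, ContinuousLinearMap.id_apply,
    innerSL_apply_apply, smul_eq_mul]
  ring

theorem fderiv_mul_rpow_norm_sub_sq_apply (hx : x ≠ a) (u : F) :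
    fderiv ℝ (fun z => C * (‖z - a‖ ^ 2) ^ q) x u =
      2 * C * q * (‖x - a‖ ^ 2) ^ (q - 1) * ⟪x - a, u⟫ := by
  rw [(hasFDerivAt_mul_rpow_norm_sub_sq C q hx).fderiv]
  rfl

theorem norm_fderiv_mul_rpow_norm_sub_sq (hx : x ≠ a) :
    ‖fderiv ℝ (fun z => C * (‖z - a‖ ^ 2) ^ q) x‖ ^ 2 =
      (2 * C * q * (‖x - a‖ ^ 2) ^ (q - 1)) ^ 2 * ‖x - a‖ ^ 2 := by
  rw [(hasFDerivAt_mul_rpow_norm_sub_sq C q hx).fderiv, norm_smul, innerSL_apply_norm,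
    Real.norm_eq_abs, mul_pow, sq_abs]

theorem fderiv_fderiv_mul_rpow_norm_sub_sq_apply (hx : x ≠ a) (u v : F) :
    fderiv ℝ (fun y => fderiv ℝ (fun z => C * (‖z - a‖ ^ 2) ^ q) y u) x v =
      2 * C * q * (‖x - a‖ ^ 2) ^ (q - 1) * ⟪u, v⟫ +
        4 * C * q * (q - 1) * (‖x - a‖ ^ 2) ^ (q - 2) * ⟪x - a, u⟫ * ⟪x - a, v⟫ := by
  have hnear : (fun y => fderiv ℝ (fun z => C * (‖z - a‖ ^ 2) ^ q) y u) =ᶠ[nhds x]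
      fun y => (2 * C * q) * (‖y - a‖ ^ 2) ^ (q - 1) * innerSL ℝ u (y - a) := by
    filter_upwards [isOpen_ne.mem_nhds hx] with y hy
    rw [fderiv_mul_rpow_norm_sub_sq_apply C q hy, innerSL_apply_apply, real_inner_comm]
  have hinner : HasFDerivAt (fun y => innerSL ℝ u (y - a)) (innerSL ℝ u) x :=
    (innerSL ℝ u).hasFDerivAt.comp x (hasFDerivAt_sub_const a)
  rw [hnear.fderiv_eq,
    ((hasFDerivAt_mul_rpow_norm_sub_sq (2 * C * q) (q - 1) hx).fun_mul hinner).fderiv]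
  simp only [add_apply, smul_apply, innerSL_apply_apply, smul_eq_mul]
  rw [real_inner_comm u (x - a), sub_sub, one_add_one_eq_two]
  ring

theorem hessian_identity_of_eq_mul_rpow_norm_sub_sq {f : F → ℝ} {p : ℝ} (hp : p ≠ 0)
    (hf : f = fun z => C * (‖z - a‖ ^ 2) ^ (-p)) (hx : x ≠ a) (u v : F) :
    f x * fderiv ℝ (fun y => fderiv ℝ f y u) x v -
        (p + 1) / p * fderiv ℝ f x v * fderiv ℝ f x u =
      -(1 / (2 * p)) * ‖fderiv ℝ f x‖ ^ 2 * ⟪u, v⟫ := by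
  subst hf
  rw [fderiv_fderiv_mul_rpow_norm_sub_sq_apply C _ hx, fderiv_mul_rpow_norm_sub_sq_apply C _ hx,
    fderiv_mul_rpow_norm_sub_sq_apply C _ hx, norm_fderiv_mul_rpow_norm_sub_sq C _ hx]
  dsimp only
  set w := ‖x - a‖ ^ 2
  have hw : w ≠ 0 := by simpa [w, sub_eq_zero] using hx
  have hw₀ : w ^ (-p) = w ^ (-p - 1) * w := by
    rw [← Real.rpow_add_one hw, sub_add_cancel]
  have hw₂ : w ^ (-p - 2) = w ^ (-p - 1) / w := by
    rw [← Real.rpow_sub_one hw, sub_sub, one_add_one_eq_two]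
  rw [hw₀, hw₂]
  field_simp
  ring

end RpowNormSubSq

theorem OrthonormalBasis.sum_sq_apply_eq_norm_sq {ι F : Type*} [Fintype ι] [NormedAddCommGroup F]
    [InnerProductSpace ℝ F] [CompleteSpace F] (b : OrthonormalBasis ι ℝ F) (L : F →L[ℝ] ℝ) :
    ∑ i, L (b i) ^ 2 = ‖L‖ ^ 2 := by
  set y := (InnerProductSpace.toDual ℝ F).symm L
  have hL : ∀ v, L v = ⟪y, v⟫ := fun v => InnerProductSpace.toDual_symm_apply.symm
  have hy : ‖L‖ = ‖y‖ := ((InnerProductSpace.toDual ℝ F).symm.norm_map L).symm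
  simp_rw [hL, hy]
  exact b.sum_sq_inner_left y

section EuclideanSpace

variable {ι : Type*} [Fintype ι] [DecidableEq ι]

theorem EuclideanSpace.norm_sub_single_sq (x : EuclideanSpace ℝ ι) (i : ι) (c : ℝ) :
    ‖x - EuclideanSpace.single i c‖ ^ 2 = (x i - c) ^ 2 + ∑ j ∈ Finset.univ.erase i, x j ^ 2 := by
  rw [EuclideanSpace.norm_sq_eq, ← Finset.add_sum_erase _ _ (Finset.mem_univ i)]
  congr 1
  · simp
  · refine Finset.sum_congr rfl fun j hj => ?_
    simp [Finset.ne_of_mem_erase hj]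

theorem EuclideanSpace.inner_single_one_single_one (i k : ι) :
    ⟪EuclideanSpace.single k (1 : ℝ), EuclideanSpace.single i 1⟫ = if i = k then 1 else 0 := by
  simp [EuclideanSpace.inner_single_left, PiLp.single_apply, eq_comm]

end EuclideanSpace

theorem sum_sq_pder {n : ℕ} (f : E n → ℝ) (x : E n) :
    ∑ j, pder j f x ^ 2 = ‖fderiv ℝ f x‖ ^ 2 := by
  rw [← (EuclideanSpace.basisFun (Fin n) ℝ).sum_sq_apply_eq_norm_sq]
  simp [pder]

theorem vE_eq_mul_rpow_norm_sub_sq (n : ℕ) (hn : 0 < n) (ε : ℝ) :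
    vE n hn ε = fun z => ε ^ (((n : ℝ) - 2) / 2) *
      (‖z - EuclideanSpace.single (nIdx n hn) (-ε)‖ ^ 2) ^ (-(((n : ℝ) - 2) / 2)) := by
  funext z
  rw [vE, EuclideanSpace.norm_sub_single_sq, sub_neg_eq_add, add_comm (z _)]

/-- Hessian identity for `v_ε`. -/
theorem v_hessian (n : ℕ) (hn : 3 ≤ n) (ε : ℝ) (hε : 0 < ε) :
    ∀ (i k : Fin n) (x : E n), 0 < x (nIdx n (by omega)) →
      vE n (by omega) ε x * pder i (pder k (vE n (by omega) ε)) x -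
          ((n : ℝ) / ((n : ℝ) - 2)) * pder i (vE n (by omega) ε) x *
            pder k (vE n (by omega) ε) x =
        -(1 / ((n : ℝ) - 2)) * (∑ j, pder j (vE n (by omega) ε) x ^ 2) *
          (if i = k then 1 else 0) := by
  intro i k x hx
  set p : ℝ := ((n : ℝ) - 2) / 2
  have hn' : (3 : ℝ) ≤ n := by exact_mod_cast hn
  have hp : p ≠ 0 := div_ne_zero (by linarith) two_ne_zero
  have hxa : x ≠ EuclideanSpace.single (nIdx n (by omega)) (-ε) := by
    rintro rfl
    rw [PiLp.single_eq_same] at hx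
    linarith
  have hcoeff : (n : ℝ) / (n - 2) = (p + 1) / p := by
    simp only [p]; field_simp; ring
  have key := hessian_identity_of_eq_mul_rpow_norm_sub_sq (ε ^ p) hp
    (vE_eq_mul_rpow_norm_sub_sq n (by omega) ε) hxa
    (EuclideanSpace.single k 1) (EuclideanSpace.single i 1)
  rw [EuclideanSpace.inner_single_one_single_one] at key
  rwa [sum_sq_pder, hcoeff, show (n : ℝ) - 2 = 2 * p by ring]
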